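/- Let N ≥ 1, let f₁,…,f_N and ψ₁,…,ψ_N : ℝ → ℝ be smooth with each f_m nowhere zero, fix base points r*₁,…,r*_N ∈ ℝ, and for each k ∈ ℤ define c_k : ℝ^N → ℝ by c_k(r) = Σ_{m=1}^N ∫_{r*_m}^{r_m} f_m(s)^k ψ'_m(s) ds. Suppose r : ℝ² → ℝ^N is smooth and solves the diagonal system ∂_t r_i = [c₁(r) − c₀(r) f_i(r_i)] ∂_x r_i for every i. Then C_k(x,t) := c_k(r(x,t)) satisfies the hydrodynamic chain ∂_t C_k = C₁ ∂_x C_k − C₀ ∂_x C_{k+1} for every k ∈ ℤ. -/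

import Mathlib

open Real Set

/-!
By the fundamental theorem of calculus and the chain rule, every partial derivative of
`C_k = c_k ∘ r` is `Σ_m f_m(r_m)^k ψ'_m(r_m) ∂r_m`. Substituting the diagonal system for `∂_t r_m`
and using `f_m^k · f_m = f_m^{k+1}` turns `∂_t C_k` into `C₁ ∂_x C_k − C₀ ∂_x C_{k+1}` term by term.
-/

/-- Partial derivative in the first variable. -/
noncomputable def pdx (f : ℝ → ℝ → ℝ) (x t : ℝ) : ℝ := deriv (fun x' => f x' t) x

/-- Partial derivative in the second variable. -/
noncomputable def pdt (f : ℝ → ℝ → ℝ) (x t : ℝ) : ℝ := deriv (fun t' => f x t') t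

theorem hasDerivAt_pdx {F : ℝ → ℝ → ℝ} (hF : Differentiable ℝ (fun p : ℝ × ℝ => F p.1 p.2))
    (x t : ℝ) : HasDerivAt (fun x' => F x' t) (pdx F x t) x :=
  (hF.comp (differentiable_id.prodMk (differentiable_const t))).differentiableAt.hasDerivAt

theorem hasDerivAt_pdt {F : ℝ → ℝ → ℝ} (hF : Differentiable ℝ (fun p : ℝ × ℝ => F p.1 p.2))
    (x t : ℝ) : HasDerivAt (fun t' => F x t') (pdt F x t) t :=
  (hF.comp ((differentiable_const x).prodMk differentiable_id)).differentiableAt.hasDerivAt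

section MomentDerivatives

variable {ι : Type*} [Fintype ι] (φ : ι → ℝ → ℝ) (a : ι → ℝ)

theorem hasDerivAt_sum_integral_comp (hφ : ∀ m, Continuous (φ m)) {g : ℝ → ι → ℝ}
    {g' : ι → ℝ} {y : ℝ} (hg : ∀ m, HasDerivAt (fun y => g y m) (g' m) y) :
    HasDerivAt (fun y => ∑ m, ∫ s in a m..g y m, φ m s) (∑ m, φ m (g y m) * g' m) y :=
  HasDerivAt.fun_sum fun m _ =>
    ((hφ m).integral_hasStrictDerivAt (a m) (g y m)).hasDerivAt.comp
      (h := fun y => g y m) y (hg m)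

variable {φ} {R : ℝ → ℝ → ι → ℝ}

theorem pdx_sum_integral (hφ : ∀ m, Continuous (φ m))
    (hR : ∀ m, Differentiable ℝ (fun p : ℝ × ℝ => R p.1 p.2 m)) (x t : ℝ) :
    pdx (fun x t => ∑ m, ∫ s in a m..R x t m, φ m s) x t
      = ∑ m, φ m (R x t m) * pdx (fun x t => R x t m) x t :=
  (hasDerivAt_sum_integral_comp φ a hφ fun m =>
    hasDerivAt_pdx (F := fun x t => R x t m) (hR m) x t).deriv

theorem pdt_sum_integral (hφ : ∀ m, Continuous (φ m))
    (hR : ∀ m, Differentiable ℝ (fun p : ℝ × ℝ => R p.1 p.2 m)) (x t : ℝ) :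
    pdt (fun x t => ∑ m, ∫ s in a m..R x t m, φ m s) x t
      = ∑ m, φ m (R x t m) * pdt (fun x t => R x t m) x t :=
  (hasDerivAt_sum_integral_comp φ a hφ fun m =>
    hasDerivAt_pdt (F := fun x t => R x t m) (hR m) x t).deriv

end MomentDerivatives

theorem reductions_of_second_chain_general
    (N : ℕ) (f ψ : Fin N → ℝ → ℝ)
    (hf : ∀ m, ContDiff ℝ (⊤ : ℕ∞) (f m)) (hψ : ∀ m, ContDiff ℝ (⊤ : ℕ∞) (ψ m))
    (hf0 : ∀ m s, f m s ≠ 0) (r₀ : Fin N → ℝ)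
    (c : ℤ → (Fin N → ℝ) → ℝ)
    (hc : ∀ (k : ℤ) (rr : Fin N → ℝ),
      c k rr = ∑ m, ∫ s in (r₀ m)..(rr m), (f m s) ^ k * deriv (ψ m) s)
    (r : ℝ → ℝ → Fin N → ℝ)
    (hr : ContDiff ℝ (⊤ : ℕ∞) (fun p : ℝ × ℝ => r p.1 p.2))
    (hsys : ∀ (x t : ℝ) (i : Fin N),
      pdt (fun x' t' => r x' t' i) x t
        = (c 1 (r x t) - c 0 (r x t) * f i (r x t i)) * pdx (fun x' t' => r x' t' i) x t)
    (C : ℤ → ℝ → ℝ → ℝ) (hC : ∀ k x t, C k x t = c k (r x t)) :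
    ∀ (k : ℤ) (x t : ℝ),
      pdt (C k) x t = C 1 x t * pdx (C k) x t - C 0 x t * pdx (C (k + 1)) x t := by
  intro k x t
  have hr_comp : ∀ m, Differentiable ℝ (fun p : ℝ × ℝ => r p.1 p.2 m) :=
    differentiable_pi.mp (hr.differentiable (by simp))
  have h_integrand : ∀ (k : ℤ) m, Continuous (fun s => f m s ^ k * deriv (ψ m) s) := fun k m =>
    ((hf m).continuous.zpow₀ k fun s => Or.inl (hf0 m s)).mul
      ((hψ m).continuous_deriv (mod_cast le_top))
  have hC_eq : ∀ k, C k = fun x t => ∑ m, ∫ s in r₀ m..r x t m, f m s ^ k * deriv (ψ m) s :=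
    fun k => funext₂ fun x t => (hC k x t).trans (hc k _)
  rw [hC 1 x t, hC 0 x t, hC_eq k, hC_eq (k + 1), pdt_sum_integral _ (h_integrand k) hr_comp,
    pdx_sum_integral _ (h_integrand k) hr_comp, pdx_sum_integral _ (h_integrand (k + 1)) hr_comp,
    Finset.mul_sum, Finset.mul_sum, ← Finset.sum_sub_distrib]
  refine Finset.sum_congr rfl fun m _ => ?_
  rw [hsys x t m, zpow_add_one₀ (hf0 m (r x t m))]
  ring

/-- If `r` solves the diagonal system `∂ₜ rᵢ = [c₁(r) − c₀(r) fᵢ(rᵢ)] ∂ₓ rᵢ` with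
moments `c_k(r) = Σ_m ∫_{r*_m}^{r_m} f_m(s)^k ψ'_m(s) ds`, then `C_k = c_k ∘ r`
satisfies the hydrodynamic chain `∂ₜ C_k = C₁ ∂ₓ C_k − C₀ ∂ₓ C_{k+1}`. -/
theorem reductions_of_second_chain
    (N : ℕ) (hN : 1 ≤ N) (f ψ : Fin N → ℝ → ℝ)
    (hf : ∀ m, ContDiff ℝ (⊤ : ℕ∞) (f m)) (hψ : ∀ m, ContDiff ℝ (⊤ : ℕ∞) (ψ m))
    (hf0 : ∀ m s, f m s ≠ 0) (r₀ : Fin N → ℝ)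
    (c : ℤ → (Fin N → ℝ) → ℝ)
    (hc : ∀ (k : ℤ) (rr : Fin N → ℝ),
      c k rr = ∑ m, ∫ s in (r₀ m)..(rr m), (f m s) ^ k * deriv (ψ m) s)
    (r : ℝ → ℝ → Fin N → ℝ)
    (hr : ContDiff ℝ (⊤ : ℕ∞) (fun p : ℝ × ℝ => r p.1 p.2))
    (hsys : ∀ (x t : ℝ) (i : Fin N),
      pdt (fun x' t' => r x' t' i) x t
        = (c 1 (r x t) - c 0 (r x t) * f i (r x t i)) * pdx (fun x' t' => r x' t' i) x t)
    (C : ℤ → ℝ → ℝ → ℝ) (hC : ∀ k x t, C k x t = c k (r x t)) :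
    ∀ (k : ℤ) (x t : ℝ),
      pdt (C k) x t = C 1 x t * pdx (C k) x t - C 0 x t * pdx (C (k + 1)) x t :=
  reductions_of_second_chain_general N f ψ hf hψ hf0 r₀ c hc r hr hsys C hC
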